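/- Let {X_t}_{t≥0}, {Y_t}_{t≥0} be two copies of the parallel Kac's walk on the real unit sphere S^{n-1} (n = 2m) coupled via the proportional coupling, and define A_t[i] = X_t[i]², B_t[i] = Y_t[i]². Then for any ℓ ∈ ℕ, E[Σ_{i=1}^n (A_ℓ[i] − B_ℓ[i])²] ≤ 2·(3/4)^ℓ. -/

import Mathlib

open MeasureTheory

/-- A perfect matching of `Fin n`, encoded as a fixed-point-free involution. -/
def PerfectMatching (n : ℕ) : Type :=
  {σ : Equiv.Perm (Fin n) // (∀ i, σ (σ i) = i) ∧ ∀ i, σ i ≠ i}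

instance (n : ℕ) : Fintype (PerfectMatching n) := by
  unfold PerfectMatching; infer_instance

instance (n : ℕ) : MeasurableSpace (PerfectMatching n) := ⊤

/-- The uniform distribution on perfect matchings of `Fin n`. -/
noncomputable def uniformPM (n : ℕ) (h : Nonempty (PerfectMatching n)) :
    Measure (PerfectMatching n) :=
  (@PMF.uniformOfFintype (PerfectMatching n) _ h).toMeasure

/-- The uniform probability measure on the angle interval `[0, 2π)`. -/
noncomputable def uniformAngle : Measure ℝ :=
  (ENNReal.ofReal (2 * Real.pi))⁻¹ • (volume.restrict (Set.Ico 0 (2 * Real.pi)))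

/-- Random seed for one step of the coupled parallel Kac's walk: a perfect matching, a tuple of
rotation angles (one per matched pair, read off at the smaller index of the pair), and a tuple of
auxiliary angles used by the proportional coupling in the degenerate (zero-pair) case. -/
abbrev KacSeed (n : ℕ) : Type := PerfectMatching n × (Fin n → ℝ) × (Fin n → ℝ)

/-- The distribution of one seed: a uniform matching and i.i.d. uniform angles on `[0,2π)`. -/
noncomputable def kacSeedMeasure (n : ℕ) (h : Nonempty (PerfectMatching n)) :
    Measure (KacSeed n) :=
  (uniformPM n h).prod
    ((Measure.pi fun _ : Fin n => uniformAngle).prod (Measure.pi fun _ : Fin n => uniformAngle))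

/-- One step of the parallel Kac's walk on `ℝ^n`: each matched pair `(i, σ i)` (with `i` the
smaller index) is rotated by the angle `θ i`. -/
noncomputable def kacStep {n : ℕ} (σ : PerfectMatching n) (θ : Fin n → ℝ)
    (v : Fin n → ℝ) : Fin n → ℝ := fun i =>
  if i ≤ σ.1 i then Real.cos (θ i) * v i - Real.sin (θ i) * v (σ.1 i)
  else Real.sin (θ (σ.1 i)) * v (σ.1 i) + Real.cos (θ (σ.1 i)) * v i

/-- One step of the proportional coupling of two parallel Kac's walks: both chains use the same
matching; `X` is rotated by the uniform angles, while the updated `Y`-pair is the vector with the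
same Euclidean length as the old `Y`-pair and the same argument as the updated `X`-pair (chosen
uniformly, via the auxiliary angles, when the `X`-pair is zero). -/
noncomputable def coupledKacStep {n : ℕ} (s : KacSeed n)
    (p : (Fin n → ℝ) × (Fin n → ℝ)) : (Fin n → ℝ) × (Fin n → ℝ) :=
  let σ := s.1.1
  let θ := s.2.1
  let ψ := s.2.2
  let x := p.1
  let y := p.2
  let x' := kacStep s.1 θ x
  let y' : Fin n → ℝ := fun i =>
    let i0 := min i (σ i)
    let r := Real.sqrt (x i0 ^ 2 + x (σ i0) ^ 2)
    let r' := Real.sqrt (y i0 ^ 2 + y (σ i0) ^ 2)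
    if r ≠ 0 then (r' / r) * x' i
    else if i ≤ σ i then r' * Real.cos (ψ i) else r' * Real.sin (ψ (σ i))
  (x', y')

/-- The coupled chains `(X_ℓ, Y_ℓ)` obtained by running `ℓ` coupled steps with the given seeds. -/
noncomputable def coupledKacWalk {n : ℕ} {ℓ : ℕ} (s : Fin ℓ → KacSeed n)
    (x0 y0 : Fin n → ℝ) : (Fin n → ℝ) × (Fin n → ℝ) :=
  (List.ofFn s).foldl (fun p seed => coupledKacStep seed p) (x0, y0)

namespace KacAux

open Real MeasureTheory

variable {n : ℕ}

lemma pm_invol (σ : PerfectMatching n) (i : Fin n) : σ.1 (σ.1 i) = i := σ.2.1 i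
lemma pm_ne (σ : PerfectMatching n) (i : Fin n) : σ.1 i ≠ i := σ.2.2 i

lemma pm_le_iff (σ : PerfectMatching n) (i : Fin n) : i ≤ σ.1 i ↔ i < σ.1 i :=
  ⟨fun h => lt_of_le_of_ne h (Ne.symm (pm_ne σ i)), le_of_lt⟩

lemma kacStep_left {σ : PerfectMatching n} {θ x : Fin n → ℝ} {i : Fin n} (h : i < σ.1 i) :
    kacStep σ θ x i = Real.cos (θ i) * x i - Real.sin (θ i) * x (σ.1 i) := by
  simp [kacStep, h.le]

lemma kacStep_right {σ : PerfectMatching n} {θ x : Fin n → ℝ} {i : Fin n} (h : i < σ.1 i) :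
    kacStep σ θ x (σ.1 i) = Real.sin (θ i) * x i + Real.cos (θ i) * x (σ.1 i) := by
  have h2 : ¬ (σ.1 i ≤ σ.1 (σ.1 i)) := by
    rw [pm_invol]; exact not_le.2 h
  simp only [kacStep, pm_invol]
  rw [if_neg (not_le.2 h)]

lemma kacStep_pair_sq {σ : PerfectMatching n} {θ x : Fin n → ℝ} {i : Fin n} (h : i < σ.1 i) :
    (kacStep σ θ x i) ^ 2 + (kacStep σ θ x (σ.1 i)) ^ 2 = x i ^ 2 + x (σ.1 i) ^ 2 := by
  rw [kacStep_left h, kacStep_right h]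
  nlinarith [Real.sin_sq_add_cos_sq (θ i)]

/-- doubling over an involution: if pairwise sums vanish then the sum vanishes -/
lemma sum_eq_of_pair (σ : PerfectMatching n) (g : Fin n → ℝ)
    (hg : ∀ i, g i + g (σ.1 i) = 0) : ∑ i, g i = 0 := by
  have h1 : ∑ i, g (σ.1 i) = ∑ i, g i := Equiv.sum_comp σ.1 g
  have h2 : ∑ i, (g i + g (σ.1 i)) = 0 := by
    simp [hg]
  rw [Finset.sum_add_distrib, h1] at h2
  linarith

lemma sum_sq_kacStep (σ : PerfectMatching n) (θ x : Fin n → ℝ) :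
    ∑ i, (kacStep σ θ x i) ^ 2 = ∑ i, x i ^ 2 := by
  have key : ∀ i : Fin n, ((kacStep σ θ x i) ^ 2 - x i ^ 2)
      + ((kacStep σ θ x (σ.1 i)) ^ 2 - x (σ.1 i) ^ 2) = 0 := by
    intro i
    rcases (pm_ne σ i).lt_or_gt with h | h
    · have := kacStep_pair_sq (σ := σ) (θ := θ) (x := x) (i := σ.1 i) (by rw [pm_invol]; exact h)
      rw [pm_invol] at this
      linarith
    · have := kacStep_pair_sq (σ := σ) (θ := θ) (x := x) h
      linarith
  have := sum_eq_of_pair σ _ key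
  rw [Finset.sum_sub_distrib] at this
  linarith

end KacAux
namespace KacAux

open Real MeasureTheory

variable {n : ℕ}

/-- Shorthand for the quantity `∑ i, (X[i]² - Y[i]²)²`. -/
noncomputable def sqDist (p : (Fin n → ℝ) × (Fin n → ℝ)) : ℝ :=
  ∑ i, (p.1 i ^ 2 - p.2 i ^ 2) ^ 2

lemma sqDist_nonneg (p : (Fin n → ℝ) × (Fin n → ℝ)) : 0 ≤ sqDist p :=
  Finset.sum_nonneg fun _ _ => sq_nonneg _

lemma sqDist_le (p : (Fin n → ℝ) × (Fin n → ℝ)) :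
    sqDist p ≤ (∑ i, p.1 i ^ 2) ^ 2 + (∑ i, p.2 i ^ 2) ^ 2 := by
  have h1 : sqDist p ≤ ∑ i, ((p.1 i ^ 2) ^ 2 + (p.2 i ^ 2) ^ 2) := by
    refine Finset.sum_le_sum fun i _ => ?_
    nlinarith [sq_nonneg (p.1 i), sq_nonneg (p.2 i)]
  have h2 : ∀ (f : Fin n → ℝ), (∀ i, 0 ≤ f i) → ∑ i, f i ^ 2 ≤ (∑ i, f i) ^ 2 := by
    intro f hf
    have : ∀ i ∈ Finset.univ, f i ^ 2 ≤ f i * ∑ j, f j := by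
      intro i _
      have : f i ≤ ∑ j, f j := Finset.single_le_sum (fun j _ => hf j) (Finset.mem_univ i)
      nlinarith [hf i]
    calc ∑ i, f i ^ 2 ≤ ∑ i, f i * ∑ j, f j := Finset.sum_le_sum this
      _ = (∑ i, f i) ^ 2 := by rw [← Finset.sum_mul]; ring
  rw [sqDist] at h1
  calc sqDist p ≤ ∑ i, ((p.1 i ^ 2) ^ 2 + (p.2 i ^ 2) ^ 2) := h1
    _ = ∑ i, (p.1 i ^ 2) ^ 2 + ∑ i, (p.2 i ^ 2) ^ 2 := Finset.sum_add_distrib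
    _ ≤ (∑ i, p.1 i ^ 2) ^ 2 + (∑ i, p.2 i ^ 2) ^ 2 :=
        add_le_add (h2 _ fun i => sq_nonneg _) (h2 _ fun i => sq_nonneg _)

/-- the second component of the coupled step, unfolded at an index `i` with `i < σ i`. -/
lemma coupled_snd_left {s : KacSeed n} {p : (Fin n → ℝ) × (Fin n → ℝ)} {i : Fin n}
    (h : i < s.1.1 i) :
    (coupledKacStep s p).2 i =
      if Real.sqrt (p.1 i ^ 2 + p.1 (s.1.1 i) ^ 2) ≠ 0 then
        (Real.sqrt (p.2 i ^ 2 + p.2 (s.1.1 i) ^ 2) / Real.sqrt (p.1 i ^ 2 + p.1 (s.1.1 i) ^ 2))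
          * (kacStep s.1 s.2.1 p.1 i)
      else Real.sqrt (p.2 i ^ 2 + p.2 (s.1.1 i) ^ 2) * Real.cos (s.2.2 i) := by
  have hmin : min i (s.1.1 i) = i := min_eq_left h.le
  simp only [coupledKacStep, hmin, if_pos h.le]

lemma coupled_snd_right {s : KacSeed n} {p : (Fin n → ℝ) × (Fin n → ℝ)} {i : Fin n}
    (h : i < s.1.1 i) :
    (coupledKacStep s p).2 (s.1.1 i) =
      if Real.sqrt (p.1 i ^ 2 + p.1 (s.1.1 i) ^ 2) ≠ 0 then
        (Real.sqrt (p.2 i ^ 2 + p.2 (s.1.1 i) ^ 2) / Real.sqrt (p.1 i ^ 2 + p.1 (s.1.1 i) ^ 2))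
          * (kacStep s.1 s.2.1 p.1 (s.1.1 i))
      else Real.sqrt (p.2 i ^ 2 + p.2 (s.1.1 i) ^ 2) * Real.sin (s.2.2 i) := by
  simp only [coupledKacStep, pm_invol]
  rw [min_eq_right h.le, if_neg (not_le.2 h)]

lemma coupled_snd_pair_sq {s : KacSeed n} {p : (Fin n → ℝ) × (Fin n → ℝ)} {i : Fin n}
    (h : i < s.1.1 i) :
    ((coupledKacStep s p).2 i) ^ 2 + ((coupledKacStep s p).2 (s.1.1 i)) ^ 2
      = p.2 i ^ 2 + p.2 (s.1.1 i) ^ 2 := by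
  have hxnn : (0:ℝ) ≤ p.1 i ^ 2 + p.1 (s.1.1 i) ^ 2 := by positivity
  have hynn : (0:ℝ) ≤ p.2 i ^ 2 + p.2 (s.1.1 i) ^ 2 := by positivity
  have hr2 : Real.sqrt (p.1 i ^ 2 + p.1 (s.1.1 i) ^ 2) ^ 2 = p.1 i ^ 2 + p.1 (s.1.1 i) ^ 2 :=
    Real.sq_sqrt hxnn
  have hr'2 : Real.sqrt (p.2 i ^ 2 + p.2 (s.1.1 i) ^ 2) ^ 2 = p.2 i ^ 2 + p.2 (s.1.1 i) ^ 2 :=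
    Real.sq_sqrt hynn
  rw [coupled_snd_left h, coupled_snd_right h]
  by_cases hr : Real.sqrt (p.1 i ^ 2 + p.1 (s.1.1 i) ^ 2) ≠ 0
  · rw [if_pos hr, if_pos hr]
    have hks := kacStep_pair_sq (σ := s.1) (θ := s.2.1) (x := p.1) h
    have hx0 : p.1 i ^ 2 + p.1 (s.1.1 i) ^ 2 ≠ 0 := by
      intro h0; apply hr; rw [h0, Real.sqrt_zero]
    have e1 : (Real.sqrt (p.2 i ^ 2 + p.2 (s.1.1 i) ^ 2)
          / Real.sqrt (p.1 i ^ 2 + p.1 (s.1.1 i) ^ 2) * kacStep s.1 s.2.1 p.1 i) ^ 2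
        + (Real.sqrt (p.2 i ^ 2 + p.2 (s.1.1 i) ^ 2)
          / Real.sqrt (p.1 i ^ 2 + p.1 (s.1.1 i) ^ 2) * kacStep s.1 s.2.1 p.1 (s.1.1 i)) ^ 2
        = (Real.sqrt (p.2 i ^ 2 + p.2 (s.1.1 i) ^ 2) ^ 2
            / Real.sqrt (p.1 i ^ 2 + p.1 (s.1.1 i) ^ 2) ^ 2)
          * ((kacStep s.1 s.2.1 p.1 i) ^ 2 + (kacStep s.1 s.2.1 p.1 (s.1.1 i)) ^ 2) := by
      ring
    rw [e1, hks, hr2, hr'2, div_mul_cancel₀ _ hx0]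
  · rw [if_neg hr, if_neg hr]
    nlinarith [Real.sin_sq_add_cos_sq (s.2.2 i)]

lemma sum_sq_coupled_snd (s : KacSeed n) (p : (Fin n → ℝ) × (Fin n → ℝ)) :
    ∑ i, ((coupledKacStep s p).2 i) ^ 2 = ∑ i, p.2 i ^ 2 := by
  have key : ∀ i : Fin n, (((coupledKacStep s p).2 i) ^ 2 - p.2 i ^ 2)
      + (((coupledKacStep s p).2 (s.1.1 i)) ^ 2 - p.2 (s.1.1 i) ^ 2) = 0 := by
    intro i
    rcases (pm_ne s.1 i).lt_or_gt with h | h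
    · have := coupled_snd_pair_sq (s := s) (p := p) (i := s.1.1 i)
        (by rw [pm_invol]; exact h)
      rw [pm_invol] at this
      linarith
    · have := coupled_snd_pair_sq (s := s) (p := p) h
      linarith
  have := sum_eq_of_pair s.1 _ key
  rw [Finset.sum_sub_distrib] at this
  linarith

lemma coupled_fst (s : KacSeed n) (p : (Fin n → ℝ) × (Fin n → ℝ)) :
    (coupledKacStep s p).1 = kacStep s.1 s.2.1 p.1 := rfl

lemma sum_sq_coupled_fst (s : KacSeed n) (p : (Fin n → ℝ) × (Fin n → ℝ)) :
    ∑ i, ((coupledKacStep s p).1 i) ^ 2 = ∑ i, p.1 i ^ 2 := by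
  rw [coupled_fst]; exact sum_sq_kacStep s.1 s.2.1 p.1

end KacAux
namespace KacAux

open Real MeasureTheory intervalIntegral

instance uniformAngle_prob : IsProbabilityMeasure uniformAngle := by
  constructor
  rw [uniformAngle]
  have h2π : (0:ℝ) < 2 * Real.pi := by positivity
  simp only [Measure.smul_apply, Measure.restrict_apply MeasurableSet.univ, Set.univ_inter,
    Real.volume_Ico, smul_eq_mul, sub_zero]
  rw [ENNReal.inv_mul_cancel (ne_of_gt (ENNReal.ofReal_pos.2 h2π)) ENNReal.ofReal_ne_top]

lemma integral_uniformAngle (f : ℝ → ℝ) (hf : Continuous f) :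
    ∫ t, f t ∂uniformAngle = (2 * Real.pi)⁻¹ * ∫ t in (0:ℝ)..(2 * Real.pi), f t := by
  have h2π : (0:ℝ) < 2 * Real.pi := by positivity
  rw [uniformAngle, MeasureTheory.integral_smul_measure]
  rw [ENNReal.toReal_inv, ENNReal.toReal_ofReal h2π.le]
  rw [intervalIntegral.integral_of_le h2π.le]
  rw [integral_Ico_eq_integral_Ioo, integral_Ioc_eq_integral_Ioo]
  simp [smul_eq_mul]

lemma integrable_uniformAngle (f : ℝ → ℝ) (hf : Continuous f) :
    Integrable f uniformAngle := by
  rw [uniformAngle]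
  have h2π : (0:ℝ) < 2 * Real.pi := by positivity
  refine Integrable.smul_measure ?_
    (ENNReal.inv_ne_top.2 (ne_of_gt (ENNReal.ofReal_pos.2 h2π)))
  have : IntegrableOn f (Set.Icc 0 (2 * Real.pi)) MeasureTheory.volume :=
    hf.continuousOn.integrableOn_Icc
  exact this.mono_set Set.Ico_subset_Icc_self

lemma I_cos4 : ∫ t in (0:ℝ)..(2 * Real.pi), Real.cos t ^ 4 = 3 * Real.pi / 4 := by
  have h := integral_cos_pow (a := 0) (b := 2 * Real.pi) 2
  simp [Real.sin_two_pi, Real.cos_two_pi] at h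
  rw [h]
  ring

lemma I_sin4 : ∫ t in (0:ℝ)..(2 * Real.pi), Real.sin t ^ 4 = 3 * Real.pi / 4 := by
  have h := integral_sin_pow (a := 0) (b := 2 * Real.pi) 2
  simp [Real.sin_two_pi, Real.cos_two_pi] at h
  rw [h]
  ring

lemma I_c2s2 : ∫ t in (0:ℝ)..(2 * Real.pi), Real.cos t ^ 2 * Real.sin t ^ 2 = Real.pi / 4 := by
  have h := integral_sin_sq_mul_cos_sq (a := 0) (b := 2 * Real.pi)
  have e : ∀ t : ℝ, Real.cos t ^ 2 * Real.sin t ^ 2 = Real.sin t ^ 2 * Real.cos t ^ 2 := by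
    intro t; ring
  rw [intervalIntegral.integral_congr (fun t _ => e t), h]
  have e8 : (4:ℝ) * (2 * Real.pi) = (8:ℕ) * Real.pi := by push_cast; ring
  rw [e8, Real.sin_nat_mul_pi]
  simp
  ring

lemma I_c3s : ∫ t in (0:ℝ)..(2 * Real.pi), Real.cos t ^ 3 * Real.sin t = 0 := by
  have hd : ∀ t ∈ Set.uIcc (0:ℝ) (2 * Real.pi),
      HasDerivAt (fun u => -(Real.cos u ^ 4) / 4) (Real.cos t ^ 3 * Real.sin t) t := by
    intro t _
    have h1 : HasDerivAt (fun u => Real.cos u ^ 4)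
        (4 * Real.cos t ^ 3 * (-Real.sin t)) t := by
      simpa using (Real.hasDerivAt_cos t).fun_pow 4
    have h2 := (h1.neg).div_const 4
    exact h2.congr_deriv (by ring)
  rw [intervalIntegral.integral_eq_sub_of_hasDerivAt hd (by
    apply Continuous.intervalIntegrable; fun_prop)]
  simp [Real.cos_two_pi]

lemma I_cs3 : ∫ t in (0:ℝ)..(2 * Real.pi), Real.cos t * Real.sin t ^ 3 = 0 := by
  have hd : ∀ t ∈ Set.uIcc (0:ℝ) (2 * Real.pi),
      HasDerivAt (fun u => Real.sin u ^ 4 / 4) (Real.cos t * Real.sin t ^ 3) t := by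
    intro t _
    have h1 : HasDerivAt (fun u => Real.sin u ^ 4)
        (4 * Real.sin t ^ 3 * Real.cos t) t := by
      simpa using (Real.hasDerivAt_sin t).fun_pow 4
    have h2 := h1.div_const 4
    exact h2.congr_deriv (by ring)
  rw [intervalIntegral.integral_eq_sub_of_hasDerivAt hd (by
    apply Continuous.intervalIntegrable; fun_prop)]
  simp [Real.sin_two_pi]

/-- the fourth-moment computation for the rotated coordinate. -/
lemma moment_cos (u v : ℝ) :
    ∫ t, (Real.cos t * u - Real.sin t * v) ^ 4 ∂uniformAngle
      = 3 / 8 * (u ^ 2 + v ^ 2) ^ 2 := by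
  have hpi : (0:ℝ) < Real.pi := Real.pi_pos
  rw [integral_uniformAngle _ (by fun_prop)]
  have e : Set.EqOn (fun t => (Real.cos t * u - Real.sin t * v) ^ 4)
      (fun t => u ^ 4 * Real.cos t ^ 4 + (-(4 * u ^ 3 * v)) * (Real.cos t ^ 3 * Real.sin t)
        + (6 * u ^ 2 * v ^ 2) * (Real.cos t ^ 2 * Real.sin t ^ 2)
        + (-(4 * u * v ^ 3)) * (Real.cos t * Real.sin t ^ 3) + v ^ 4 * Real.sin t ^ 4)
      (Set.uIcc (0:ℝ) (2 * Real.pi)) := by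
    intro t _; simp only; ring
  rw [intervalIntegral.integral_congr e]
  have i1 : IntervalIntegrable (fun t => u ^ 4 * Real.cos t ^ 4) MeasureTheory.volume 0 (2 * Real.pi) := by
    apply Continuous.intervalIntegrable; fun_prop
  have i2 : IntervalIntegrable (fun t => (-(4 * u ^ 3 * v)) * (Real.cos t ^ 3 * Real.sin t)) MeasureTheory.volume 0 (2 * Real.pi) := by
    apply Continuous.intervalIntegrable; fun_prop
  have i3 : IntervalIntegrable (fun t => (6 * u ^ 2 * v ^ 2) * (Real.cos t ^ 2 * Real.sin t ^ 2)) MeasureTheory.volume 0 (2 * Real.pi) := by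
    apply Continuous.intervalIntegrable; fun_prop
  have i4 : IntervalIntegrable (fun t => (-(4 * u * v ^ 3)) * (Real.cos t * Real.sin t ^ 3)) MeasureTheory.volume 0 (2 * Real.pi) := by
    apply Continuous.intervalIntegrable; fun_prop
  have i5 : IntervalIntegrable (fun t => v ^ 4 * Real.sin t ^ 4) MeasureTheory.volume 0 (2 * Real.pi) := by
    apply Continuous.intervalIntegrable; fun_prop
  rw [intervalIntegral.integral_add (((i1.add i2).add i3).add i4) i5,
    intervalIntegral.integral_add ((i1.add i2).add i3) i4,
    intervalIntegral.integral_add (i1.add i2) i3,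
    intervalIntegral.integral_add i1 i2]
  rw [intervalIntegral.integral_const_mul, intervalIntegral.integral_const_mul,
    intervalIntegral.integral_const_mul, intervalIntegral.integral_const_mul,
    intervalIntegral.integral_const_mul]
  rw [I_cos4, I_sin4, I_c2s2, I_c3s, I_cs3]
  field_simp
  ring

lemma moment_sin (u v : ℝ) :
    ∫ t, (Real.sin t * u + Real.cos t * v) ^ 4 ∂uniformAngle
      = 3 / 8 * (u ^ 2 + v ^ 2) ^ 2 := by
  have h := moment_cos v (-u)
  have e : ∀ t : ℝ, (Real.cos t * v - Real.sin t * (-u)) ^ 4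
      = (Real.sin t * u + Real.cos t * v) ^ 4 := by intro t; ring
  simp only [e] at h
  rw [h]
  ring

end KacAux
namespace KacAux

open Real MeasureTheory

variable {n : ℕ}

/-- the product measure of the two angle-tuples. -/
noncomputable def angleMeasure (n : ℕ) : Measure ((Fin n → ℝ) × (Fin n → ℝ)) :=
  (Measure.pi fun _ : Fin n => uniformAngle).prod (Measure.pi fun _ : Fin n => uniformAngle)

instance : IsProbabilityMeasure (angleMeasure n) := by
  rw [angleMeasure]; infer_instance

lemma map_eval_pi (i : Fin n) :
    (Measure.pi fun _ : Fin n => uniformAngle).map (Function.eval i) = uniformAngle := by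
  ext s hs
  rw [Measure.map_apply (measurable_pi_apply i) hs]
  rw [Set.eval_preimage]
  rw [Measure.pi_pi]
  rw [Finset.prod_eq_single i]
  · simp
  · intro j _ hj
    simp [Function.update_of_ne hj]
  · intro hmem
    exact absurd (Finset.mem_univ i) hmem

lemma mp_eval1 (i : Fin n) :
    MeasurePreserving (fun ω : (Fin n → ℝ) × (Fin n → ℝ) => ω.1 i)
      (angleMeasure n) uniformAngle := by
  have h1 : MeasurePreserving (Prod.fst : ((Fin n → ℝ) × (Fin n → ℝ)) → (Fin n → ℝ))
      (angleMeasure n) (Measure.pi fun _ : Fin n => uniformAngle) := by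
    refine ⟨measurable_fst, ?_⟩
    rw [angleMeasure, Measure.map_fst_prod, measure_univ, one_smul]
  exact (MeasurePreserving.comp ⟨measurable_pi_apply i, map_eval_pi i⟩ h1 : _)

lemma mp_eval2 (i : Fin n) :
    MeasurePreserving (fun ω : (Fin n → ℝ) × (Fin n → ℝ) => ω.2 i)
      (angleMeasure n) uniformAngle := by
  have h1 : MeasurePreserving (Prod.snd : ((Fin n → ℝ) × (Fin n → ℝ)) → (Fin n → ℝ))
      (angleMeasure n) (Measure.pi fun _ : Fin n => uniformAngle) := by
    refine ⟨measurable_snd, ?_⟩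
    rw [angleMeasure, Measure.map_snd_prod, measure_univ, one_smul]
  exact (MeasurePreserving.comp ⟨measurable_pi_apply i, map_eval_pi i⟩ h1 : _)

lemma integral_comp_eval1 (i : Fin n) (f : ℝ → ℝ) (hf : Continuous f) :
    ∫ ω, f (ω.1 i) ∂(angleMeasure n) = ∫ t, f t ∂uniformAngle := by
  rw [← (mp_eval1 i).map_eq,
    integral_map (mp_eval1 i).measurable.aemeasurable hf.aestronglyMeasurable]

lemma integral_comp_eval2 (i : Fin n) (f : ℝ → ℝ) (hf : Continuous f) :
    ∫ ω, f (ω.2 i) ∂(angleMeasure n) = ∫ t, f t ∂uniformAngle := by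
  rw [← (mp_eval2 i).map_eq,
    integral_map (mp_eval2 i).measurable.aemeasurable hf.aestronglyMeasurable]

lemma integrable_comp_eval1 (i : Fin n) (f : ℝ → ℝ) (hf : Continuous f) :
    Integrable (fun ω => f (ω.1 i)) (angleMeasure n) :=
  ((mp_eval1 i).integrable_comp hf.aestronglyMeasurable).2 (integrable_uniformAngle f hf)

lemma integrable_comp_eval2 (i : Fin n) (f : ℝ → ℝ) (hf : Continuous f) :
    Integrable (fun ω => f (ω.2 i)) (angleMeasure n) :=
  ((mp_eval2 i).integrable_comp hf.aestronglyMeasurable).2 (integrable_uniformAngle f hf)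

end KacAux
namespace KacAux

open Real MeasureTheory

variable {n : ℕ}

/-- the set of smaller indices of the pairs of a matching. -/
def lowHalf (σ : PerfectMatching n) : Finset (Fin n) :=
  Finset.univ.filter (fun i => i < σ.1 i)

lemma mem_lowHalf {σ : PerfectMatching n} {i : Fin n} :
    i ∈ lowHalf σ ↔ i < σ.1 i := by
  simp [lowHalf]

lemma pair_decomp (σ : PerfectMatching n) (T : Fin n → ℝ) :
    ∑ i, T i = ∑ i ∈ lowHalf σ, (T i + T (σ.1 i)) := by
  rw [Finset.sum_add_distrib]
  have hsplit := Finset.sum_filter_add_sum_filter_not Finset.univ (fun i => i < σ.1 i) T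
  have hbij : ∑ i ∈ Finset.univ.filter (fun i => ¬ i < σ.1 i), T i
      = ∑ i ∈ lowHalf σ, T (σ.1 i) := by
    refine Finset.sum_bij' (fun i _ => σ.1 i) (fun i _ => σ.1 i) ?_ ?_ ?_ ?_ ?_
    · intro a ha
      rw [mem_lowHalf]
      simp only [Finset.mem_filter, Finset.mem_univ, true_and, not_lt] at ha
      have := lt_of_le_of_ne ha (pm_ne σ a)
      rw [pm_invol]
      exact this
    · intro a ha
      rw [mem_lowHalf] at ha
      simp only [Finset.mem_filter, Finset.mem_univ, true_and, not_lt, pm_invol]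
      exact ha.le
    · intro a _; exact pm_invol σ a
    · intro a _; exact pm_invol σ a
    · intro a _
      simp only [pm_invol]
  rw [← hsplit, hbij, lowHalf]

end KacAux
namespace KacAux

open Real MeasureTheory

variable {n : ℕ}

section FixedSigma

variable (σ : PerfectMatching n) (x y : Fin n → ℝ)

/-- the summand of `sqDist` after one step, as a function of the angle seed. -/
noncomputable def stepTerm (σ : PerfectMatching n) (x y : Fin n → ℝ)
    (ω : (Fin n → ℝ) × (Fin n → ℝ)) (k : Fin n) : ℝ :=
  ((coupledKacStep (σ, ω.1, ω.2) (x, y)).1 k ^ 2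
    - (coupledKacStep (σ, ω.1, ω.2) (x, y)).2 k ^ 2) ^ 2

/-- explicit formula for the pair contribution, in the nondegenerate case. -/
lemma stepTerm_pair_ne {i : Fin n} (h : i < σ.1 i)
    (hr : Real.sqrt (x i ^ 2 + x (σ.1 i) ^ 2) ≠ 0) (ω : (Fin n → ℝ) × (Fin n → ℝ)) :
    stepTerm σ x y ω i + stepTerm σ x y ω (σ.1 i)
      = (1 - (Real.sqrt (y i ^ 2 + y (σ.1 i) ^ 2)
            / Real.sqrt (x i ^ 2 + x (σ.1 i) ^ 2)) ^ 2) ^ 2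
        * ((Real.cos (ω.1 i) * x i - Real.sin (ω.1 i) * x (σ.1 i)) ^ 4
          + (Real.sin (ω.1 i) * x i + Real.cos (ω.1 i) * x (σ.1 i)) ^ 4) := by
  have hL := coupled_snd_left (s := (σ, ω.1, ω.2)) (p := (x, y)) h
  have hR := coupled_snd_right (s := (σ, ω.1, ω.2)) (p := (x, y)) h
  simp only at hL hR
  rw [if_pos hr] at hL hR
  simp only [stepTerm, coupled_fst, hL, hR]
  rw [kacStep_left h, kacStep_right h]
  ring

/-- explicit formula for the pair contribution, in the degenerate case. -/
lemma stepTerm_pair_eq {i : Fin n} (h : i < σ.1 i)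
    (hr : ¬ Real.sqrt (x i ^ 2 + x (σ.1 i) ^ 2) ≠ 0) (ω : (Fin n → ℝ) × (Fin n → ℝ)) :
    stepTerm σ x y ω i + stepTerm σ x y ω (σ.1 i)
      = (Real.cos (ω.2 i) * Real.sqrt (y i ^ 2 + y (σ.1 i) ^ 2) - Real.sin (ω.2 i) * 0) ^ 4
        + (Real.sin (ω.2 i) * Real.sqrt (y i ^ 2 + y (σ.1 i) ^ 2) + Real.cos (ω.2 i) * 0) ^ 4 := by
  have hx0 : x i = 0 ∧ x (σ.1 i) = 0 := by
    rw [not_not] at hr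
    have h0 : x i ^ 2 + x (σ.1 i) ^ 2 = 0 := by
      have hnn : (0:ℝ) ≤ x i ^ 2 + x (σ.1 i) ^ 2 := by positivity
      have := Real.sqrt_eq_zero hnn |>.1 hr
      linarith [this]
    constructor <;> nlinarith [sq_nonneg (x i), sq_nonneg (x (σ.1 i))]
  have hL := coupled_snd_left (s := (σ, ω.1, ω.2)) (p := (x, y)) h
  have hR := coupled_snd_right (s := (σ, ω.1, ω.2)) (p := (x, y)) h
  simp only at hL hR
  rw [if_neg hr] at hL hR
  simp only [stepTerm, coupled_fst, hL, hR]
  rw [kacStep_left h, kacStep_right h, hx0.1, hx0.2]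
  ring

/-- integral of the pair contribution over the angles. -/
lemma integral_stepTerm_pair {i : Fin n} (h : i < σ.1 i) :
    Integrable (fun ω => stepTerm σ x y ω i + stepTerm σ x y ω (σ.1 i)) (angleMeasure n)
      ∧ ∫ ω, (stepTerm σ x y ω i + stepTerm σ x y ω (σ.1 i)) ∂(angleMeasure n)
        = 3 / 4 * ((x i ^ 2 - y i ^ 2) + (x (σ.1 i) ^ 2 - y (σ.1 i) ^ 2)) ^ 2 := by
  set j := σ.1 i with hj
  have hxnn : (0:ℝ) ≤ x i ^ 2 + x j ^ 2 := by positivity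
  have hynn : (0:ℝ) ≤ y i ^ 2 + y j ^ 2 := by positivity
  have hr2 : Real.sqrt (x i ^ 2 + x j ^ 2) ^ 2 = x i ^ 2 + x j ^ 2 := Real.sq_sqrt hxnn
  have hr'2 : Real.sqrt (y i ^ 2 + y j ^ 2) ^ 2 = y i ^ 2 + y j ^ 2 := Real.sq_sqrt hynn
  by_cases hr : Real.sqrt (x i ^ 2 + x j ^ 2) ≠ 0
  · set K : ℝ := (1 - (Real.sqrt (y i ^ 2 + y j ^ 2) / Real.sqrt (x i ^ 2 + x j ^ 2)) ^ 2) ^ 2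
      with hK
    set F : ℝ → ℝ := fun t => K * ((Real.cos t * x i - Real.sin t * x j) ^ 4
        + (Real.sin t * x i + Real.cos t * x j) ^ 4) with hF
    have hFc : Continuous F := by rw [hF]; fun_prop
    have hfun : (fun ω : (Fin n → ℝ) × (Fin n → ℝ) =>
        stepTerm σ x y ω i + stepTerm σ x y ω j) = fun ω => F (ω.1 i) := by
      funext ω
      rw [stepTerm_pair_ne σ x y h hr ω]
    constructor
    · rw [hfun]; exact integrable_comp_eval1 i F hFc
    · rw [hfun, integral_comp_eval1 i F hFc]
      have : ∫ t, F t ∂uniformAngle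
          = K * ((3 / 8 * (x i ^ 2 + x j ^ 2) ^ 2) + 3 / 8 * (x i ^ 2 + x j ^ 2) ^ 2) := by
        rw [hF]
        rw [MeasureTheory.integral_const_mul]
        rw [MeasureTheory.integral_add
          (integrable_uniformAngle _ (by fun_prop)) (integrable_uniformAngle _ (by fun_prop))]
        rw [moment_cos, moment_sin]
      rw [this]
      have hx0 : x i ^ 2 + x j ^ 2 ≠ 0 := fun h0 => hr (by rw [h0, Real.sqrt_zero])
      have key : K * (x i ^ 2 + x j ^ 2) ^ 2
          = ((x i ^ 2 + x j ^ 2) - (y i ^ 2 + y j ^ 2)) ^ 2 := by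
        rw [hK, div_pow, hr2, hr'2]
        field_simp
      nlinarith [key]
  · have hfun : (fun ω : (Fin n → ℝ) × (Fin n → ℝ) =>
        stepTerm σ x y ω i + stepTerm σ x y ω j) = fun ω =>
          (Real.cos (ω.2 i) * Real.sqrt (y i ^ 2 + y j ^ 2) - Real.sin (ω.2 i) * 0) ^ 4
          + (Real.sin (ω.2 i) * Real.sqrt (y i ^ 2 + y j ^ 2) + Real.cos (ω.2 i) * 0) ^ 4 := by
      funext ω
      rw [stepTerm_pair_eq σ x y h hr ω]
    have hx0 : x i = 0 ∧ x j = 0 := by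
      rw [not_not] at hr
      have h0 : x i ^ 2 + x j ^ 2 = 0 := by
        have := Real.sqrt_eq_zero hxnn |>.1 hr
        linarith [this]
      constructor <;> nlinarith [sq_nonneg (x i), sq_nonneg (x j)]
    set G : ℝ → ℝ := fun t =>
      (Real.cos t * Real.sqrt (y i ^ 2 + y j ^ 2) - Real.sin t * 0) ^ 4
      + (Real.sin t * Real.sqrt (y i ^ 2 + y j ^ 2) + Real.cos t * 0) ^ 4 with hG
    have hGc : Continuous G := by rw [hG]; fun_prop
    constructor
    · rw [hfun]; exact integrable_comp_eval2 i G hGc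
    · rw [hfun, integral_comp_eval2 i G hGc]
      have : ∫ t, G t ∂uniformAngle
          = 3 / 8 * (Real.sqrt (y i ^ 2 + y j ^ 2) ^ 2 + 0 ^ 2) ^ 2
            + 3 / 8 * (Real.sqrt (y i ^ 2 + y j ^ 2) ^ 2 + 0 ^ 2) ^ 2 := by
        rw [hG]
        rw [MeasureTheory.integral_add
          (integrable_uniformAngle _ (by fun_prop)) (integrable_uniformAngle _ (by fun_prop))]
        rw [moment_cos, moment_sin]
      rw [this, hr'2, hx0.1, hx0.2]
      ring

/-- the integral over the angle seed, for a fixed matching. -/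
lemma integral_step_sigma :
    ∫ ω, sqDist (coupledKacStep (σ, ω.1, ω.2) (x, y)) ∂(angleMeasure n)
      = ∑ i ∈ lowHalf σ,
          3 / 4 * ((x i ^ 2 - y i ^ 2) + (x (σ.1 i) ^ 2 - y (σ.1 i) ^ 2)) ^ 2 := by
  have hpt : ∀ ω : (Fin n → ℝ) × (Fin n → ℝ),
      sqDist (coupledKacStep (σ, ω.1, ω.2) (x, y))
        = ∑ i ∈ lowHalf σ, (stepTerm σ x y ω i + stepTerm σ x y ω (σ.1 i)) := by
    intro ω
    exact pair_decomp σ (stepTerm σ x y ω)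
  rw [MeasureTheory.integral_congr_ae (Filter.Eventually.of_forall hpt)]
  rw [MeasureTheory.integral_finset_sum _ (fun i hi =>
    (integral_stepTerm_pair σ x y (mem_lowHalf.1 hi)).1)]
  exact Finset.sum_congr rfl fun i hi =>
    (integral_stepTerm_pair σ x y (mem_lowHalf.1 hi)).2

end FixedSigma

end KacAux
namespace KacAux

open Real MeasureTheory

variable {n : ℕ}

/-- conjugation of a perfect matching by a transposition. -/
def pmConj (τ : Equiv.Perm (Fin n)) (hτ : ∀ k, τ (τ k) = k) (σ : PerfectMatching n) :
    PerfectMatching n :=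
  ⟨(τ.trans σ.1).trans τ, by
    constructor
    · intro k
      simp only [Equiv.trans_apply]
      rw [hτ, σ.2.1, hτ]
    · intro k hk
      simp only [Equiv.trans_apply] at hk
      have : σ.1 (τ k) = τ k := by
        have := congrArg τ hk
        rwa [hτ] at this
      exact σ.2.2 (τ k) this⟩

lemma card_fiber_eq (i j j' : Fin n) (hj : j ≠ i) (hj' : j' ≠ i) :
    (Finset.univ.filter fun σ : PerfectMatching n => σ.1 i = j).card
      = (Finset.univ.filter fun σ : PerfectMatching n => σ.1 i = j').card := by
  set τ := Equiv.swap j j' with hτdef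
  have hτ : ∀ k, τ (τ k) = k := fun k => Equiv.swap_apply_self j j' k
  have hτi : τ i = i := Equiv.swap_apply_of_ne_of_ne (Ne.symm hj) (Ne.symm hj')
  refine Finset.card_bij' (fun σ _ => pmConj τ hτ σ) (fun σ _ => pmConj τ hτ σ) ?_ ?_ ?_ ?_
  · intro σ hσ
    simp only [Finset.mem_filter, Finset.mem_univ, true_and] at hσ ⊢
    show τ (σ.1 (τ i)) = j'
    rw [hτi, hσ, hτdef, Equiv.swap_apply_left]
  · intro σ hσ
    simp only [Finset.mem_filter, Finset.mem_univ, true_and] at hσ ⊢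
    show τ (σ.1 (τ i)) = j
    rw [hτi, hσ, hτdef, Equiv.swap_apply_right]
  · intro σ _
    apply Subtype.ext
    apply Equiv.ext
    intro k
    show τ (τ (σ.1 (τ (τ k)))) = σ.1 k
    rw [hτ, hτ]
  · intro σ _
    apply Subtype.ext
    apply Equiv.ext
    intro k
    show τ (τ (σ.1 (τ (τ k)))) = σ.1 k
    rw [hτ, hτ]

lemma sum_over_pm (i : Fin n) (d : Fin n → ℝ) :
    ∑ σ : PerfectMatching n, d (σ.1 i)
      = ∑ j ∈ Finset.univ.erase i,
          ((Finset.univ.filter fun σ : PerfectMatching n => σ.1 i = j).card : ℝ) * d j := by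
  classical
  rw [← Finset.sum_fiberwise_of_maps_to
    (g := fun σ : PerfectMatching n => σ.1 i)
    (s := Finset.univ) (t := Finset.univ.erase i) ?_ (fun σ => d (σ.1 i))]
  · refine Finset.sum_congr rfl fun j hj => ?_
    have : ∀ σ ∈ Finset.univ.filter (fun σ : PerfectMatching n => σ.1 i = j),
        d (σ.1 i) = d j := by
      intro σ hσ
      simp only [Finset.mem_filter] at hσ
      rw [hσ.2]
    rw [Finset.sum_congr rfl this, Finset.sum_const, nsmul_eq_mul]
  · intro σ _
    exact Finset.mem_erase.2 ⟨pm_ne σ i, Finset.mem_univ _⟩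

lemma cross_nonpos (hn : 2 ≤ n) (d : Fin n → ℝ) (hd : ∑ i, d i = 0) :
    ∑ σ : PerfectMatching n, ∑ i, d i * d (σ.1 i) ≤ 0 := by
  rw [Finset.sum_comm]
  refine Finset.sum_nonpos fun i _ => ?_
  have : ∑ σ : PerfectMatching n, d i * d (σ.1 i)
      = d i * ∑ σ : PerfectMatching n, d (σ.1 i) := by
    rw [Finset.mul_sum]
  rw [this, sum_over_pm i d]
  obtain ⟨j₀, hj₀⟩ : ∃ j₀ : Fin n, j₀ ≠ i :=
    Fintype.exists_ne_of_one_lt_card (by simp; omega) i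
  set c := ((Finset.univ.filter fun σ : PerfectMatching n => σ.1 i = j₀).card : ℝ) with hc
  have hconst : ∀ j ∈ Finset.univ.erase i,
      ((Finset.univ.filter fun σ : PerfectMatching n => σ.1 i = j).card : ℝ) * d j
        = c * d j := by
    intro j hj
    have hji : j ≠ i := (Finset.mem_erase.1 hj).1
    rw [hc]
    congr 1
    exact_mod_cast congrArg Nat.cast (card_fiber_eq i j j₀ hji hj₀)
  rw [Finset.sum_congr rfl hconst, ← Finset.mul_sum]
  have herase : ∑ j ∈ Finset.univ.erase i, d j = - d i := by
    have := Finset.add_sum_erase Finset.univ d (Finset.mem_univ i)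
    rw [hd] at this
    linarith
  rw [herase]
  have hc0 : 0 ≤ c := by positivity
  nlinarith [sq_nonneg (d i)]

end KacAux
namespace KacAux

open Real MeasureTheory

variable {n : ℕ}

instance : MeasurableSingletonClass (PerfectMatching n) :=
  ⟨fun _ => MeasurableSpace.measurableSet_top⟩

lemma measurable_pm_slices {α γ : Type*} [MeasurableSpace α] [MeasurableSpace γ]
    {F : PerfectMatching n × α → γ} (hF : ∀ σ, Measurable fun a => F (σ, a)) :
    Measurable F := by
  have h1 : Measurable fun z : α × PerfectMatching n => F (z.2, z.1) :=
    measurable_from_prod_countable_left fun σ => hF σ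
  have h2 : F = (fun z : α × PerfectMatching n => F (z.2, z.1)) ∘ Prod.swap := by
    funext z; rfl
  rw [h2]
  exact h1.comp measurable_swap

/-- joint measurability of the coupled step in the seed and the state. -/
lemma measurable_coupledKacStep :
    Measurable (fun q : KacSeed n × ((Fin n → ℝ) × (Fin n → ℝ)) =>
      coupledKacStep q.1 q.2) := by
  have hre : (fun q : KacSeed n × ((Fin n → ℝ) × (Fin n → ℝ)) => coupledKacStep q.1 q.2)
      = (fun z : PerfectMatching n ×
            (((Fin n → ℝ) × (Fin n → ℝ)) × ((Fin n → ℝ) × (Fin n → ℝ))) =>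
          coupledKacStep (z.1, z.2.1.1, z.2.1.2) z.2.2)
        ∘ (fun q => (q.1.1, (q.1.2, q.2))) := by
    funext q; rfl
  rw [hre]
  have hmap : Measurable (fun q : KacSeed n × ((Fin n → ℝ) × (Fin n → ℝ)) =>
      ((q.1.1, (q.1.2, q.2)) : PerfectMatching n ×
        (((Fin n → ℝ) × (Fin n → ℝ)) × ((Fin n → ℝ) × (Fin n → ℝ))))) :=
    (measurable_fst.comp measurable_fst).prodMk
      ((measurable_snd.comp measurable_fst).prodMk measurable_snd)
  refine Measurable.comp ?_ hmap
  · apply measurable_pm_slices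
    intro σ
    -- fixed matching: measurable in the angles and the state
    apply Measurable.prod
    · -- first component: kacStep
      apply measurable_pi_iff.2
      intro k
      by_cases hk : k ≤ σ.1 k
      · simp only [coupledKacStep, kacStep, if_pos hk]
        fun_prop
      · simp only [coupledKacStep, kacStep, if_neg hk]
        fun_prop
    · -- second component
      apply measurable_pi_iff.2
      intro k
      simp only [coupledKacStep]
      set i0 := min k (σ.1 k) with hi0
      have hcond : MeasurableSet {a : ((Fin n → ℝ) × (Fin n → ℝ)) ×
          ((Fin n → ℝ) × (Fin n → ℝ)) |
          Real.sqrt (a.2.1 i0 ^ 2 + a.2.1 (σ.1 i0) ^ 2) ≠ 0} := by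
        have : Measurable fun a : ((Fin n → ℝ) × (Fin n → ℝ)) ×
            ((Fin n → ℝ) × (Fin n → ℝ)) =>
            Real.sqrt (a.2.1 i0 ^ 2 + a.2.1 (σ.1 i0) ^ 2) :=
          Real.continuous_sqrt.measurable.comp' (by fun_prop)
        exact (this (measurableSet_singleton 0)).compl
      apply Measurable.ite hcond
      · have m1 : Measurable fun a : ((Fin n → ℝ) × (Fin n → ℝ)) ×
            ((Fin n → ℝ) × (Fin n → ℝ)) =>
            Real.sqrt (a.2.2 i0 ^ 2 + a.2.2 (σ.1 i0) ^ 2) :=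
          Real.continuous_sqrt.measurable.comp' (by fun_prop)
        have m2 : Measurable fun a : ((Fin n → ℝ) × (Fin n → ℝ)) ×
            ((Fin n → ℝ) × (Fin n → ℝ)) =>
            Real.sqrt (a.2.1 i0 ^ 2 + a.2.1 (σ.1 i0) ^ 2) :=
          Real.continuous_sqrt.measurable.comp' (by fun_prop)
        have mks : Measurable fun a : ((Fin n → ℝ) × (Fin n → ℝ)) ×
            ((Fin n → ℝ) × (Fin n → ℝ)) => kacStep σ a.1.1 a.2.1 k := by
          by_cases hk : k ≤ σ.1 k
          · simp only [kacStep, if_pos hk]; fun_prop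
          · simp only [kacStep, if_neg hk]; fun_prop
        exact (m1.div m2).mul mks
      · by_cases hk : k ≤ σ.1 k
        · simp only [if_pos hk]
          exact (Real.continuous_sqrt.measurable.comp' (by fun_prop)).mul
            (Real.measurable_cos.comp' (by fun_prop))
        · simp only [if_neg hk]
          exact (Real.continuous_sqrt.measurable.comp' (by fun_prop)).mul
            (Real.measurable_sin.comp' (by fun_prop))

lemma continuous_sqDist : Continuous (sqDist (n := n)) := by
  apply continuous_finset_sum
  intro i _
  fun_prop

lemma walk_succ {ℓ : ℕ} (s : Fin (ℓ + 1) → KacSeed n) (x0 y0 : Fin n → ℝ) :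
    coupledKacWalk s x0 y0
      = coupledKacWalk (fun j => s j.succ)
          (coupledKacStep (s 0) (x0, y0)).1 (coupledKacStep (s 0) (x0, y0)).2 := by
  rw [coupledKacWalk, coupledKacWalk, List.ofFn_succ, List.foldl_cons]

lemma walk_zero (s : Fin 0 → KacSeed n) (x0 y0 : Fin n → ℝ) :
    coupledKacWalk s x0 y0 = (x0, y0) := by
  rw [coupledKacWalk]
  simp

/-- joint measurability of the coupled walk in the seeds and the initial state. -/
lemma measurable_coupledKacWalk (ℓ : ℕ) :
    Measurable (fun q : (Fin ℓ → KacSeed n) × ((Fin n → ℝ) × (Fin n → ℝ)) =>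
      coupledKacWalk q.1 q.2.1 q.2.2) := by
  induction ℓ with
  | zero =>
    have : (fun q : (Fin 0 → KacSeed n) × ((Fin n → ℝ) × (Fin n → ℝ)) =>
        coupledKacWalk q.1 q.2.1 q.2.2) = fun q => q.2 := by
      funext q
      rw [walk_zero]
    rw [this]
    exact measurable_snd
  | succ ℓ ih =>
    have : (fun q : (Fin (ℓ + 1) → KacSeed n) × ((Fin n → ℝ) × (Fin n → ℝ)) =>
        coupledKacWalk q.1 q.2.1 q.2.2)
        = (fun q : (Fin ℓ → KacSeed n) × ((Fin n → ℝ) × (Fin n → ℝ)) =>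
            coupledKacWalk q.1 q.2.1 q.2.2)
          ∘ (fun q => ((fun j => q.1 j.succ), coupledKacStep (q.1 0) q.2)) := by
      funext q
      simp only [Function.comp_apply]
      rw [walk_succ]
    rw [this]
    apply ih.comp
    apply Measurable.prod
    · apply measurable_pi_iff.2
      intro j
      exact (measurable_pi_apply j.succ).comp measurable_fst
    · show Measurable fun q : (Fin (ℓ + 1) → KacSeed n) × ((Fin n → ℝ) × (Fin n → ℝ)) =>
          coupledKacStep (q.1 0) q.2
      have hp : Measurable fun q : (Fin (ℓ + 1) → KacSeed n) × ((Fin n → ℝ) × (Fin n → ℝ)) =>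
          q.1 0 :=
        Measurable.comp' (measurable_pi_apply _) measurable_fst
      exact measurable_coupledKacStep.comp' (hp.prodMk measurable_snd)

end KacAux
namespace KacAux

open Real MeasureTheory

variable {n : ℕ}

instance uniformPM_prob (h : Nonempty (PerfectMatching n)) :
    IsProbabilityMeasure (uniformPM n h) := by
  rw [uniformPM]
  infer_instance

instance kacSeed_prob (h : Nonempty (PerfectMatching n)) :
    IsProbabilityMeasure (kacSeedMeasure n h) := by
  rw [kacSeedMeasure]
  have : IsProbabilityMeasure ((Measure.pi fun _ : Fin n => uniformAngle).prod
      (Measure.pi fun _ : Fin n => uniformAngle)) := by infer_instance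
  infer_instance

lemma uniformPM_singleton (h : Nonempty (PerfectMatching n)) (σ : PerfectMatching n) :
    uniformPM n h {σ} = (Fintype.card (PerfectMatching n) : ENNReal)⁻¹ := by
  rw [uniformPM, PMF.toMeasure_apply_singleton _ _ (measurableSet_singleton σ)]
  simp [PMF.uniformOfFintype_apply]

/-- the one-step contraction, in Lebesgue-integral form. -/
lemma step_lintegral (hn : 2 ≤ n) (h : Nonempty (PerfectMatching n)) (x y : Fin n → ℝ)
    (hx : ∑ i, x i ^ 2 = 1) (hy : ∑ i, y i ^ 2 = 1) :
    ∫⁻ s, ENNReal.ofReal (sqDist (coupledKacStep s (x, y))) ∂(kacSeedMeasure n h)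
      ≤ ENNReal.ofReal (3 / 4) * ENNReal.ofReal (sqDist (x, y)) := by
  classical
  set d : Fin n → ℝ := fun i => x i ^ 2 - y i ^ 2 with hd
  have hd0 : ∑ i, d i = 0 := by
    rw [hd]
    rw [Finset.sum_sub_distrib, hx, hy]
    ring
  -- measurability of the integrand
  have hmeas : Measurable fun s : KacSeed n =>
      ENNReal.ofReal (sqDist (coupledKacStep s (x, y))) := by
    apply ENNReal.measurable_ofReal.comp'
    exact continuous_sqDist.measurable.comp'
      (measurable_coupledKacStep.comp' (measurable_id.prodMk measurable_const))
  have hprod : kacSeedMeasure n h = (uniformPM n h).prod (angleMeasure n) := rfl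
  rw [hprod, MeasureTheory.lintegral_prod _ hmeas.aemeasurable]
  -- compute the inner integral for each matching
  have hinner : ∀ σ : PerfectMatching n,
      ∫⁻ ω, ENNReal.ofReal (sqDist (coupledKacStep (σ, ω) (x, y))) ∂(angleMeasure n)
        = ENNReal.ofReal (∑ i ∈ lowHalf σ, 3 / 4 * (d i + d (σ.1 i)) ^ 2) := by
    intro σ
    have hpt : ∀ ω : (Fin n → ℝ) × (Fin n → ℝ),
        sqDist (coupledKacStep (σ, ω.1, ω.2) (x, y))
          = ∑ i ∈ lowHalf σ, (stepTerm σ x y ω i + stepTerm σ x y ω (σ.1 i)) := fun ω =>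
      pair_decomp σ (stepTerm σ x y ω)
    have hint : Integrable (fun ω => sqDist (coupledKacStep (σ, ω.1, ω.2) (x, y)))
        (angleMeasure n) := by
      refine (integrable_finset_sum (lowHalf σ) (fun i hi =>
        (integral_stepTerm_pair σ x y (mem_lowHalf.1 hi)).1)).congr ?_
      exact Filter.Eventually.of_forall fun ω => (hpt ω).symm
    have hnn : 0 ≤ᵐ[angleMeasure n]
        fun ω : (Fin n → ℝ) × (Fin n → ℝ) => sqDist (coupledKacStep (σ, ω.1, ω.2) (x, y)) :=
      Filter.Eventually.of_forall fun ω => sqDist_nonneg _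
    rw [← ofReal_integral_eq_lintegral_ofReal hint hnn, integral_step_sigma σ x y]
  simp_rw [hinner]
  -- sum over the matchings
  rw [lintegral_fintype]
  simp_rw [uniformPM_singleton h]
  set N := Fintype.card (PerfectMatching n) with hN
  have hNpos : 0 < N := Fintype.card_pos
  have hNinv : ((N : ENNReal))⁻¹ = ENNReal.ofReal ((N : ℝ))⁻¹ := by
    rw [ENNReal.ofReal_inv_of_pos (by exact_mod_cast hNpos), ENNReal.ofReal_natCast]
  -- turn everything into a single `ofReal`
  have hsum : ∀ σ : PerfectMatching n,
      ENNReal.ofReal (∑ i ∈ lowHalf σ, 3 / 4 * (d i + d (σ.1 i)) ^ 2) * ((N : ENNReal))⁻¹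
        = ENNReal.ofReal ((∑ i ∈ lowHalf σ, 3 / 4 * (d i + d (σ.1 i)) ^ 2) * (N : ℝ)⁻¹) := by
    intro σ
    rw [hNinv, ← ENNReal.ofReal_mul]
    positivity
  simp_rw [hsum]
  rw [← ENNReal.ofReal_sum_of_nonneg (fun σ _ => by positivity)]
  rw [← ENNReal.ofReal_mul (by norm_num)]
  apply ENNReal.ofReal_le_ofReal
  -- now a purely real inequality
  have hJ : ∀ σ : PerfectMatching n,
      ∑ i ∈ lowHalf σ, 3 / 4 * (d i + d (σ.1 i)) ^ 2
        = 3 / 8 * ((∑ i, d i ^ 2) + (∑ i, d (σ.1 i) ^ 2) + 2 * ∑ i, d i * d (σ.1 i)) := by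
    intro σ
    have h1 := pair_decomp σ (fun i => 3 / 4 * (d i + d (σ.1 i)) ^ 2)
    have h2 : ∀ i : Fin n, (3:ℝ) / 4 * (d (σ.1 i) + d (σ.1 (σ.1 i))) ^ 2
        = 3 / 4 * (d i + d (σ.1 i)) ^ 2 := by
      intro i; rw [pm_invol]; ring
    simp only [h2] at h1
    have h3 : ∑ i, (3:ℝ) / 4 * (d i + d (σ.1 i)) ^ 2
        = 3 / 4 * ((∑ i, d i ^ 2) + (∑ i, d (σ.1 i) ^ 2) + 2 * ∑ i, d i * d (σ.1 i)) := by
      have he : ∀ i : Fin n, (3:ℝ) / 4 * (d i + d (σ.1 i)) ^ 2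
          = 3 / 4 * d i ^ 2 + 3 / 4 * d (σ.1 i) ^ 2 + 3 / 2 * (d i * d (σ.1 i)) := by
        intro i; ring
      simp only [he]
      rw [Finset.sum_add_distrib, Finset.sum_add_distrib, ← Finset.mul_sum, ← Finset.mul_sum,
        ← Finset.mul_sum]
      ring
    have h4 : ∑ i ∈ lowHalf σ, ((3:ℝ) / 4 * (d i + d (σ.1 i)) ^ 2
        + 3 / 4 * (d i + d (σ.1 i)) ^ 2)
        = 2 * ∑ i ∈ lowHalf σ, (3:ℝ) / 4 * (d i + d (σ.1 i)) ^ 2 := by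
      rw [Finset.mul_sum]
      refine Finset.sum_congr rfl fun i _ => by ring
    rw [h4] at h1
    rw [h3] at h1
    linarith
  have hsig : ∀ σ : PerfectMatching n, ∑ i, d (σ.1 i) ^ 2 = ∑ i, d i ^ 2 :=
    fun σ => Equiv.sum_comp σ.1 (fun i => d i ^ 2)
  have hcross := cross_nonpos hn d hd0
  have hsum2 : ∑ σ : PerfectMatching n, ∑ i ∈ lowHalf σ, 3 / 4 * (d i + d (σ.1 i)) ^ 2
      ≤ N * (3 / 4 * ∑ i, d i ^ 2) := by
    calc ∑ σ : PerfectMatching n, ∑ i ∈ lowHalf σ, 3 / 4 * (d i + d (σ.1 i)) ^ 2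
        = ∑ σ : PerfectMatching n,
            (3 / 4 * (∑ i, d i ^ 2) + 3 / 4 * ∑ i, d i * d (σ.1 i)) := by
          refine Finset.sum_congr rfl fun σ _ => ?_
          rw [hJ σ, hsig σ]; ring
      _ = N * (3 / 4 * ∑ i, d i ^ 2)
            + 3 / 4 * ∑ σ : PerfectMatching n, ∑ i, d i * d (σ.1 i) := by
          rw [Finset.sum_add_distrib, Finset.sum_const, ← Finset.mul_sum]
          simp [hN, mul_comm]
      _ ≤ N * (3 / 4 * ∑ i, d i ^ 2) := by nlinarith
  have hDxy : sqDist (x, y) = ∑ i, d i ^ 2 := by rw [sqDist]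
  rw [hDxy, ← Finset.sum_mul]
  have hNR : (0:ℝ) < N := by exact_mod_cast hNpos
  calc (∑ σ : PerfectMatching n, ∑ i ∈ lowHalf σ, 3 / 4 * (d i + d (σ.1 i)) ^ 2) * (N:ℝ)⁻¹
      ≤ (N * (3 / 4 * ∑ i, d i ^ 2)) * (N:ℝ)⁻¹ := by
        apply mul_le_mul_of_nonneg_right hsum2
        positivity
    _ = 3 / 4 * ∑ i, d i ^ 2 := by field_simp

end KacAux
namespace KacAux

open Real MeasureTheory

variable {n : ℕ}

lemma walk_lintegral (hn : 2 ≤ n) (h : Nonempty (PerfectMatching n)) (ℓ : ℕ) :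
    ∀ x y : Fin n → ℝ, (∑ i, x i ^ 2 = 1) → (∑ i, y i ^ 2 = 1) →
    ∫⁻ s : Fin ℓ → KacSeed n, ENNReal.ofReal (sqDist (coupledKacWalk s x y))
        ∂(Measure.pi fun _ => kacSeedMeasure n h)
      ≤ ENNReal.ofReal (3 / 4) ^ ℓ * ENNReal.ofReal (sqDist (x, y)) := by
  induction ℓ with
  | zero =>
    intro x y hx hy
    simp only [walk_zero]
    rw [lintegral_const]
    simp
  | succ ℓ ih =>
    intro x y hx hy
    set μ := kacSeedMeasure n h with hμ
    set e := MeasurableEquiv.piFinSuccAbove (fun _ : Fin (ℓ + 1) => KacSeed n) 0 with he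
    have hmp := measurePreserving_piFinSuccAbove (fun _ : Fin (ℓ + 1) => kacSeedMeasure n h) 0
    set F : KacSeed n × (Fin ℓ → KacSeed n) → ENNReal := fun z =>
      ENNReal.ofReal (sqDist (coupledKacWalk z.2
        (coupledKacStep z.1 (x, y)).1 (coupledKacStep z.1 (x, y)).2)) with hF
    have hFmeas : Measurable F := by
      apply ENNReal.measurable_ofReal.comp'
      apply continuous_sqDist.measurable.comp'
      exact (measurable_coupledKacWalk ℓ).comp'
        (measurable_snd.prodMk
          (measurable_coupledKacStep.comp' (measurable_fst.prodMk measurable_const)))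
    have hpt : ∀ s : Fin (ℓ + 1) → KacSeed n,
        ENNReal.ofReal (sqDist (coupledKacWalk s x y)) = F (e s) := by
      intro s
      rw [hF]
      simp only [MeasurableEquiv.piFinSuccAbove_apply, Fin.insertNthEquiv,
        Equiv.coe_fn_symm_mk]
      have harg : (fun j : Fin ℓ => s ((0 : Fin (ℓ + 1)).succAbove j))
          = fun j : Fin ℓ => s j.succ := by
        funext j
        rw [Fin.zero_succAbove]
      rw [walk_succ s x y]
      congr 1
    calc ∫⁻ s : Fin (ℓ + 1) → KacSeed n, ENNReal.ofReal (sqDist (coupledKacWalk s x y))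
          ∂(Measure.pi fun _ => μ)
        = ∫⁻ s, F (e s) ∂(Measure.pi fun _ => μ) := by
          exact lintegral_congr hpt
      _ = ∫⁻ z, F z ∂(μ.prod (Measure.pi fun _ : Fin ℓ => μ)) := by
          exact hmp.lintegral_comp hFmeas
      _ = ∫⁻ t, ∫⁻ s', F (t, s') ∂(Measure.pi fun _ : Fin ℓ => μ) ∂μ :=
          MeasureTheory.lintegral_prod F hFmeas.aemeasurable
      _ ≤ ∫⁻ t, ENNReal.ofReal (3 / 4) ^ ℓ
            * ENNReal.ofReal (sqDist (coupledKacStep t (x, y))) ∂μ := by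
          refine lintegral_mono fun t => ?_
          have hx' : ∑ i, (coupledKacStep t (x, y)).1 i ^ 2 = 1 := by
            rw [sum_sq_coupled_fst]; exact hx
          have hy' : ∑ i, (coupledKacStep t (x, y)).2 i ^ 2 = 1 := by
            rw [sum_sq_coupled_snd]; exact hy
          have := ih (coupledKacStep t (x, y)).1 (coupledKacStep t (x, y)).2 hx' hy'
          exact this
      _ = ENNReal.ofReal (3 / 4) ^ ℓ
            * ∫⁻ t, ENNReal.ofReal (sqDist (coupledKacStep t (x, y))) ∂μ := by
          rw [lintegral_const_mul]
          apply ENNReal.measurable_ofReal.comp'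
          exact continuous_sqDist.measurable.comp'
            (measurable_coupledKacStep.comp' (measurable_id.prodMk measurable_const))
      _ ≤ ENNReal.ofReal (3 / 4) ^ ℓ
            * (ENNReal.ofReal (3 / 4) * ENNReal.ofReal (sqDist (x, y))) :=
          mul_le_mul_right (step_lintegral hn h x y hx hy) _
      _ = ENNReal.ofReal (3 / 4) ^ (ℓ + 1) * ENNReal.ofReal (sqDist (x, y)) := by
          rw [pow_succ]
          ring

end KacAux
/-- Under the proportional coupling of two parallel Kac's walks on the unit
sphere of `ℝ^n` (`n = 2m`), with `A_ℓ[i] = X_ℓ[i]²`, `B_ℓ[i] = Y_ℓ[i]²`, one has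
`E[∑ i (A_ℓ[i] − B_ℓ[i])²] ≤ 2 (3/4)^ℓ` for any `ℓ ∈ ℕ`. -/
theorem coupledKacWalk_contraction (n m : ℕ) (hn : n = 2 * m)
    (h : Nonempty (PerfectMatching n))
    (x0 y0 : Fin n → ℝ) (hx0 : ∑ i, x0 i ^ 2 = 1) (hy0 : ∑ i, y0 i ^ 2 = 1) (ℓ : ℕ) :
    (∫ s : Fin ℓ → KacSeed n,
        ∑ i, ((coupledKacWalk s x0 y0).1 i ^ 2 - (coupledKacWalk s x0 y0).2 i ^ 2) ^ 2
          ∂(Measure.pi fun _ => kacSeedMeasure n h))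
      ≤ 2 * (3 / 4 : ℝ) ^ ℓ := by
  classical
  open KacAux in
  -- the dimension is at least 2
  have hn2 : 2 ≤ n := by
    rcases Nat.eq_zero_or_pos m with hm | hm
    · exfalso
      subst hn
      subst hm
      simp at hx0
    · omega
  have hmeas : Measurable fun s : Fin ℓ → KacSeed n => sqDist (coupledKacWalk s x0 y0) := by
    apply KacAux.continuous_sqDist.measurable.comp'
    exact (KacAux.measurable_coupledKacWalk ℓ).comp'
      ((measurable_id.prodMk measurable_const :
        Measurable fun s : Fin ℓ → KacSeed n => (s, (x0, y0))))
  have hnn : 0 ≤ᵐ[(Measure.pi fun _ : Fin ℓ => kacSeedMeasure n h)]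
      fun s : Fin ℓ → KacSeed n => sqDist (coupledKacWalk s x0 y0) :=
    Filter.Eventually.of_forall fun s => KacAux.sqDist_nonneg _
  have heq : (∫ s : Fin ℓ → KacSeed n,
        ∑ i, ((coupledKacWalk s x0 y0).1 i ^ 2 - (coupledKacWalk s x0 y0).2 i ^ 2) ^ 2
          ∂(Measure.pi fun _ => kacSeedMeasure n h))
      = ∫ s : Fin ℓ → KacSeed n, sqDist (coupledKacWalk s x0 y0)
          ∂(Measure.pi fun _ => kacSeedMeasure n h) := rfl
  rw [heq, MeasureTheory.integral_eq_lintegral_of_nonneg_ae hnn hmeas.aestronglyMeasurable]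
  have hb := KacAux.walk_lintegral hn2 h ℓ x0 y0 hx0 hy0
  have hD2 : sqDist (x0, y0) ≤ 2 := by
    have := KacAux.sqDist_le (x0, y0)
    simp only at this
    rw [hx0, hy0] at this
    norm_num at this
    exact this
  have hb2 : ∫⁻ s : Fin ℓ → KacSeed n, ENNReal.ofReal (sqDist (coupledKacWalk s x0 y0))
        ∂(Measure.pi fun _ => kacSeedMeasure n h)
      ≤ ENNReal.ofReal (2 * (3 / 4 : ℝ) ^ ℓ) := by
    refine hb.trans ?_
    calc ENNReal.ofReal (3 / 4) ^ ℓ * ENNReal.ofReal (sqDist (x0, y0))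
        ≤ ENNReal.ofReal (3 / 4) ^ ℓ * ENNReal.ofReal 2 :=
          mul_le_mul_right (ENNReal.ofReal_le_ofReal hD2) _
      _ = ENNReal.ofReal (2 * (3 / 4 : ℝ) ^ ℓ) := by
          rw [← ENNReal.ofReal_pow (by norm_num), ← ENNReal.ofReal_mul (by positivity)]
          rw [mul_comm]
  exact ENNReal.toReal_le_of_le_ofReal (by positivity) hb2
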